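/- If a linear map Φ : ℝ^d → ℝ^q satisfies (1-ε)‖y^i - y^j‖² ≤ ‖Φy^i - Φy^j‖² ≤ (1+ε)‖y^i - y^j‖² for all pairs of points in a finite sample (y^i)_{i=1}^n, then the empirical variance is preserved up to ε: (1-ε)·Var((y^i)) ≤ Var((Φy^i)) ≤ (1+ε)·Var((y^i)), where Var((z^i)_{i=1}^n) = (1/n)∑_i ‖z^i - (1/n)∑_j z^j‖². -/

import Mathlib

noncomputable def empVar {E : Type*} [NormedAddCommGroup E] [NormedSpace ℝ E]
    {n : ℕ} (z : Fin n → E) : ℝ :=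
  (1 / (n : ℝ)) * ∑ i, ‖z i - (1 / (n : ℝ)) • ∑ j, z j‖ ^ 2

/-! The empirical variance is `1 / (2 n²)` times the sum of all pairwise squared distances
`‖z i - z j‖²`, so it depends only on those distances and inherits, term by term, any
two-sided bound on them. -/

section

variable {E : Type*} [NormedAddCommGroup E] [InnerProductSpace ℝ E]

theorem sum_sum_norm_sub_sq {ι : Type*} [Fintype ι] (z : ι → E) :
    ∑ i, ∑ j, ‖z i - z j‖ ^ 2
      = 2 * Fintype.card ι * ∑ i, ‖z i‖ ^ 2 - 2 * ‖∑ i, z i‖ ^ 2 := by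
  simp only [norm_sub_sq_real, Finset.sum_add_distrib, Finset.sum_sub_distrib,
    ← Finset.mul_sum, ← inner_sum, ← sum_inner, real_inner_self_eq_norm_sq,
    Finset.sum_const, Finset.card_univ, nsmul_eq_mul]
  ring

theorem sum_sub_mean_eq_zero {n : ℕ} (hn : n ≠ 0) (z : Fin n → E) :
    ∑ i, (z i - (1 / (n : ℝ)) • ∑ j, z j) = 0 := by
  rw [Finset.sum_sub_distrib, Finset.sum_const, Finset.card_univ, Fintype.card_fin,
    ← Nat.cast_smul_eq_nsmul ℝ, smul_smul, mul_one_div_cancel (Nat.cast_ne_zero.mpr hn),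
    one_smul, sub_self]

theorem empVar_eq_sum_sum_norm_sub_sq {n : ℕ} (z : Fin n → E) :
    empVar z = 1 / (2 * (n : ℝ) ^ 2) * ∑ i, ∑ j, ‖z i - z j‖ ^ 2 := by
  rcases eq_or_ne n 0 with rfl | hn
  · simp [empVar]
  set a : Fin n → E := fun i => z i - (1 / (n : ℝ)) • ∑ j, z j
  have hsub : ∀ i j, z i - z j = a i - a j := fun i j => by simp only [a]; abel
  have hmean : ∑ i, a i = 0 := sum_sub_mean_eq_zero hn z
  have hpair := sum_sum_norm_sub_sq a
  rw [hmean, Fintype.card_fin] at hpair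
  simp only [← hsub] at hpair
  change 1 / (n : ℝ) * ∑ i, ‖a i‖ ^ 2 = _
  rw [hpair, norm_zero]
  field_simp
  ring

variable {F : Type*} [NormedAddCommGroup F] [InnerProductSpace ℝ F]
  {n : ℕ} {c : ℝ} {y : Fin n → E} {z : Fin n → F}

theorem mul_empVar_le_empVar_of_pairwise (h : ∀ i j, c * ‖y i - y j‖ ^ 2 ≤ ‖z i - z j‖ ^ 2) :
    c * empVar y ≤ empVar z := by
  simp only [empVar_eq_sum_sum_norm_sub_sq, mul_left_comm c, Finset.mul_sum]
  gcongr with i _ j _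
  exact h i j

theorem empVar_le_mul_empVar_of_pairwise (h : ∀ i j, ‖z i - z j‖ ^ 2 ≤ c * ‖y i - y j‖ ^ 2) :
    empVar z ≤ c * empVar y := by
  simp only [empVar_eq_sum_sum_norm_sub_sq, mul_left_comm c, Finset.mul_sum]
  gcongr with i _ j _
  exact h i j

end

theorem variance_preservation_of_random_projection_general
    {n d q : ℕ}
    (ε : ℝ)
    (y : Fin n → EuclideanSpace ℝ (Fin d))
    (Φ : EuclideanSpace ℝ (Fin d) →ₗ[ℝ] EuclideanSpace ℝ (Fin q))
    (h : ∀ i j, (1 - ε) * ‖y i - y j‖ ^ 2 ≤ ‖Φ (y i) - Φ (y j)‖ ^ 2 ∧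
                ‖Φ (y i) - Φ (y j)‖ ^ 2 ≤ (1 + ε) * ‖y i - y j‖ ^ 2) :
    (1 - ε) * empVar y ≤ empVar (fun i => Φ (y i)) ∧
      empVar (fun i => Φ (y i)) ≤ (1 + ε) * empVar y :=
  ⟨mul_empVar_le_empVar_of_pairwise fun i j => (h i j).1,
    empVar_le_mul_empVar_of_pairwise fun i j => (h i j).2⟩

theorem variance_preservation_of_random_projection
    {n d q : ℕ} (hn : 0 < n) (hd : 0 < d) (hq : 0 < q)
    (ε : ℝ) (hε : 0 < ε)
    (y : Fin n → EuclideanSpace ℝ (Fin d))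
    (Φ : EuclideanSpace ℝ (Fin d) →ₗ[ℝ] EuclideanSpace ℝ (Fin q))
    (h : ∀ i j, (1 - ε) * ‖y i - y j‖ ^ 2 ≤ ‖Φ (y i) - Φ (y j)‖ ^ 2 ∧
                ‖Φ (y i) - Φ (y j)‖ ^ 2 ≤ (1 + ε) * ‖y i - y j‖ ^ 2) :
    (1 - ε) * empVar y ≤ empVar (fun i => Φ (y i)) ∧
      empVar (fun i => Φ (y i)) ≤ (1 + ε) * empVar y :=
  variance_preservation_of_random_projection_general ε y Φ h
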